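/- Let S be a weakly regular set of primes, let χ : ℕ → ℝ be a multiplicative function taking values in {0,1} that is characteristic on S, and let A = {n ∈ ℕ : χ(n) = 1}. Then A has a Dedekind-Dirichlet density δ(A) with δ(A) ≠ 0 if and only if S has Dirichlet density 1. -/

import Mathlib

/-!
By the Euler product, `F(z) = ∑ χ(n) n^{-z} = ∏_p F_p(z)` with `F_p(z) = ∑_e χ(p^e) p^{-ez}`, and
uniformly for `z ≥ 1` one has `log F_p(z) = χ(p) p^{-z} + O(p^{-2})`. Hence
`log F(z) = P_S(z) + H(z)` with `H` continuous on `[1, ∞)`, and weak regularity turns this into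
`log ((z - 1) F(z)) = (1 - a) log (z - 1) + E(z)` with `E(z)` convergent as `z → 1⁺`. Since
`log (z - 1) → -∞`, the product `(z - 1) F(z)` has a nonzero limit exactly when `a = 1`, and `a` is
the Dirichlet density of `S`.
-/

open Filter Topology

/-- A set of primes `S` is *weakly regular* (with constant `a`, which is then its Dirichlet
density) if `P_S(z) = a·log(1/(z-1)) + g(z)` on `{Re z > 1}` for some function `g` holomorphic
on `{Re z > 1}` and continuous on `{Re z ≥ 1}`. -/
def WeaklyRegular (S : Set ℕ) (a : ℝ) : Prop :=
  ∃ g : ℂ → ℂ, DifferentiableOn ℂ g {z : ℂ | 1 < z.re} ∧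
    ContinuousOn g {z : ℂ | 1 ≤ z.re} ∧
    ∀ z : ℂ, 1 < z.re →
      (∑' p : S, ((p : ℕ) : ℂ) ^ (-z)) = (a : ℂ) * Complex.log (1 / (z - 1)) + g z

open Set

section PowerSeries

variable {c : ℕ → ℝ} {r : ℝ}

lemma summable_mul_pow_of_mem_Icc (hc : ∀ e, c e ∈ Icc (0 : ℝ) 1) (hr0 : 0 ≤ r) (hr1 : r < 1) :
    Summable (fun e => c e * r ^ e) :=
  (summable_geometric_of_lt_one hr0 hr1).of_nonneg_of_le
    (fun e => mul_nonneg (hc e).1 (pow_nonneg hr0 e))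
    (fun e => mul_le_of_le_one_left (pow_nonneg hr0 e) (hc e).2)

lemma one_le_tsum_mul_pow (hc : ∀ e, c e ∈ Icc (0 : ℝ) 1) (hc0 : c 0 = 1) (hr0 : 0 ≤ r)
    (hr1 : r < 1) : 1 ≤ ∑' e, c e * r ^ e := by
  simpa [hc0] using (summable_mul_pow_of_mem_Icc hc hr0 hr1).le_tsum 0
    (fun e _ => mul_nonneg (hc e).1 (pow_nonneg hr0 e))

lemma Real.abs_log_one_add_sub_le {x : ℝ} (hx : 0 ≤ x) : |Real.log (1 + x) - x| ≤ x ^ 2 := by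
  have h1x : 0 < 1 + x := by linarith
  have hlower : x - x ^ 2 ≤ 1 - (1 + x)⁻¹ := by
    rw [le_sub_iff_add_le, ← le_sub_iff_add_le', inv_le_iff_one_le_mul₀ h1x]
    nlinarith [sq_nonneg x, mul_nonneg hx (sq_nonneg x)]
  rw [abs_le]
  constructor
  · linarith [Real.one_sub_inv_le_log_of_pos h1x]
  · linarith [Real.log_le_sub_one_of_pos h1x, sq_nonneg x]

lemma abs_log_tsum_mul_pow_sub_le (hc : ∀ e, c e ∈ Icc (0 : ℝ) 1) (hc0 : c 0 = 1) (hr0 : 0 ≤ r)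
    (hr : r ≤ 1 / 2) : |Real.log (∑' e, c e * r ^ e) - c 1 * r| ≤ 6 * r ^ 2 := by
  have hr1 : r < 1 := by linarith
  have hs := summable_mul_pow_of_mem_Icc hc hr0 hr1
  set R := ∑' e, c (e + 2) * r ^ (e + 2)
  have hsplit : ∑' e, c e * r ^ e = 1 + (c 1 * r + R) := by
    rw [hs.tsum_eq_zero_add, ((summable_nat_add_iff 1).mpr hs).tsum_eq_zero_add]
    simp [hc0, R, add_assoc]
  have hR0 : 0 ≤ R := tsum_nonneg fun e => mul_nonneg (hc _).1 (pow_nonneg hr0 _)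
  have hR : R ≤ 2 * r ^ 2 := by
    have htail : HasSum (fun e => r ^ (e + 2)) (r ^ 2 * (1 - r)⁻¹) := by
      simpa [pow_add, mul_comm] using (hasSum_geometric_of_lt_one hr0 hr1).mul_left (r ^ 2)
    calc R ≤ r ^ 2 * (1 - r)⁻¹ :=
          hasSum_le (fun e => mul_le_of_le_one_left (pow_nonneg hr0 _) (hc _).2)
            ((summable_nat_add_iff 2).mpr hs).hasSum htail
      _ ≤ 2 * r ^ 2 := by
          rw [mul_comm]
          gcongr
          rw [inv_le_comm₀ (by linarith) two_pos]; linarith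
  have hc1 : c 1 * r ≤ r := mul_le_of_le_one_left hr0 (hc 1).2
  have hx0 : 0 ≤ c 1 * r + R := add_nonneg (mul_nonneg (hc 1).1 hr0) hR0
  have hx : c 1 * r + R ≤ 2 * r := by nlinarith
  rw [hsplit]
  calc |Real.log (1 + (c 1 * r + R)) - c 1 * r|
      = |(Real.log (1 + (c 1 * r + R)) - (c 1 * r + R)) + R| := by ring_nf
    _ ≤ (c 1 * r + R) ^ 2 + R :=
        (abs_add_le _ _).trans (add_le_add (Real.abs_log_one_add_sub_le hx0) (abs_of_nonneg hR0).le)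
    _ ≤ 6 * r ^ 2 := by nlinarith

end PowerSeries

lemma Nat.rpow_neg_le_inv {p : ℕ} (hp : 1 ≤ p) {z : ℝ} (hz : 1 ≤ z) :
    (p : ℝ) ^ (-z) ≤ (p : ℝ)⁻¹ := by
  simpa [Real.rpow_neg_one] using
    Real.rpow_le_rpow_of_exponent_le (by exact_mod_cast hp) (neg_le_neg hz)

lemma Nat.rpow_neg_le_half {p : ℕ} (hp : 2 ≤ p) {z : ℝ} (hz : 1 ≤ z) :
    (p : ℝ) ^ (-z) ≤ 1 / 2 := by
  refine (Nat.rpow_neg_le_inv (by omega) hz).trans ?_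
  rw [one_div]
  exact inv_anti₀ two_pos (by exact_mod_cast hp)

noncomputable def eulerFactor (χ : ℕ → ℝ) (p : ℕ) (z : ℝ) : ℝ :=
  ∑' e : ℕ, χ (p ^ e) * ((p : ℝ) ^ (-z)) ^ e

noncomputable def eulerRemainder (χ : ℕ → ℝ) (z : ℝ) : ℝ :=
  ∑' p : Nat.Primes, (Real.log (eulerFactor χ p z) - χ p * (p : ℝ) ^ (-z))

section EulerProduct

variable {χ : ℕ → ℝ} (hχ : ∀ n, χ n ∈ Icc (0 : ℝ) 1) (hχ1 : χ 1 = 1)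
include hχ

include hχ1 in
lemma one_le_eulerFactor {p : ℕ} (hp : 2 ≤ p) {z : ℝ} (hz : 1 ≤ z) : 1 ≤ eulerFactor χ p z :=
  one_le_tsum_mul_pow (fun _ => hχ _) (by simpa using hχ1) (by positivity)
    ((Nat.rpow_neg_le_half hp hz).trans_lt (by norm_num))

include hχ1 in
lemma abs_log_eulerFactor_sub_le {p : ℕ} (hp : 2 ≤ p) {z : ℝ} (hz : 1 ≤ z) :
    |Real.log (eulerFactor χ p z) - χ p * (p : ℝ) ^ (-z)| ≤ 6 * ((p : ℝ) ^ 2)⁻¹ := by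
  have hr0 : 0 ≤ (p : ℝ) ^ (-z) := by positivity
  calc |Real.log (eulerFactor χ p z) - χ p * (p : ℝ) ^ (-z)|
      ≤ 6 * ((p : ℝ) ^ (-z)) ^ 2 := by
        simpa [eulerFactor] using abs_log_tsum_mul_pow_sub_le (c := fun e => χ (p ^ e))
          (fun _ => hχ _) (by simpa using hχ1) hr0 (Nat.rpow_neg_le_half hp hz)
    _ ≤ 6 * ((p : ℝ) ^ 2)⁻¹ := by
        rw [← inv_pow]
        gcongr
        exact Nat.rpow_neg_le_inv (by omega) hz

lemma continuousOn_eulerFactor {p : ℕ} (hp : 2 ≤ p) : ContinuousOn (eulerFactor χ p) (Ici 1) := by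
  have hp0 : (p : ℝ) ≠ 0 := by positivity
  refine continuousOn_tsum (u := fun e => (1 / 2 : ℝ) ^ e) (fun e => ?_)
    (summable_geometric_of_lt_one (by norm_num) (by norm_num)) (fun e z hz => ?_)
  · exact (continuous_const.mul
      ((Real.continuous_const_rpow hp0).comp continuous_neg |>.pow e)).continuousOn
  · rw [norm_mul, norm_pow, Real.norm_of_nonneg (by positivity : (0 : ℝ) ≤ (p : ℝ) ^ (-z))]
    calc ‖χ (p ^ e)‖ * ((p : ℝ) ^ (-z)) ^ e ≤ 1 * (1 / 2) ^ e := by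
          gcongr
          · exact (Real.norm_of_nonneg (hχ _).1).trans_le (hχ _).2
          · exact Nat.rpow_neg_le_half hp hz
      _ = (1 / 2) ^ e := one_mul _

include hχ1 in
lemma continuousOn_eulerRemainder : ContinuousOn (eulerRemainder χ) (Ici 1) := by
  refine continuousOn_tsum (u := fun p : Nat.Primes => 6 * (((p : ℕ) : ℝ) ^ 2)⁻¹) (fun p => ?_)
    ((Real.summable_nat_pow_inv.mpr one_lt_two).subtype _ |>.mul_left 6)
    (fun p z hz => abs_log_eulerFactor_sub_le hχ hχ1 p.2.two_le hz)
  have hp0 : ((p : ℕ) : ℝ) ≠ 0 := by exact_mod_cast p.2.ne_zero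
  exact ((continuousOn_eulerFactor hχ p.2.two_le).log fun z hz =>
      (zero_lt_one.trans_le (one_le_eulerFactor hχ hχ1 p.2.two_le hz)).ne').sub
    (continuous_const.mul ((Real.continuous_const_rpow hp0).comp continuous_neg)).continuousOn

lemma summable_norm_mul_rpow_neg {z : ℝ} (hz : 1 < z) :
    Summable (fun n : ℕ => ‖χ n * (n : ℝ) ^ (-z)‖) :=
  (Real.summable_nat_rpow.mpr (neg_lt_neg hz)).of_nonneg_of_le (fun _ => norm_nonneg _)
    fun n => by
      rw [norm_mul, Real.norm_of_nonneg (hχ n).1, Real.norm_of_nonneg (by positivity)]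
      exact mul_le_of_le_one_left (by positivity) (hχ n).2

include hχ1 in
lemma one_le_tsum_mul_rpow_neg {z : ℝ} (hz : 1 < z) : 1 ≤ ∑' n : ℕ, χ n * (n : ℝ) ^ (-z) := by
  simpa [hχ1] using (summable_norm_mul_rpow_neg hχ hz).of_norm.le_tsum 1
    (fun n _ => mul_nonneg (hχ n).1 (by positivity))

include hχ1 in
lemma hasSum_log_eulerFactor (hχmul : ∀ m n : ℕ, Nat.Coprime m n → χ (m * n) = χ m * χ n)
    {z : ℝ} (hz : 1 < z) :
    HasSum (fun p : Nat.Primes => Real.log (eulerFactor χ p z))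
      (Real.log (∑' n : ℕ, χ n * (n : ℝ) ^ (-z))) := by
  have hprod := EulerProduct.eulerProduct_hasProd (f := fun n : ℕ => χ n * (n : ℝ) ^ (-z))
    (by simp [hχ1])
    (fun {m n} hmn => by
      rw [hχmul m n hmn, Nat.cast_mul, Real.mul_rpow (by positivity) (by positivity)]; ring)
    (summable_norm_mul_rpow_neg hχ hz) (by simp [Real.zero_rpow (by linarith : -z ≠ 0)])
  have hfactor : (fun p : Nat.Primes => ∑' e, χ ((p : ℕ) ^ e) * (((p : ℕ) ^ e : ℕ) : ℝ) ^ (-z))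
      = fun p : Nat.Primes => eulerFactor χ p z := by
    ext p
    exact tsum_congr fun e => by rw [Nat.cast_pow, Real.rpow_pow_comm (by positivity)]
  rw [hfactor] at hprod
  have hlog := (Real.continuousAt_log
    (zero_lt_one.trans_le (one_le_tsum_mul_rpow_neg hχ hχ1 hz)).ne').tendsto.comp hprod
  refine hlog.congr fun s => ?_
  rw [Function.comp_apply, Real.log_prod fun p _ =>
    (zero_lt_one.trans_le (one_le_eulerFactor hχ hχ1 p.2.two_le hz.le)).ne']

include hχ1 in
lemma log_tsum_mul_rpow_neg_eq (hχmul : ∀ m n : ℕ, Nat.Coprime m n → χ (m * n) = χ m * χ n)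
    {z : ℝ} (hz : 1 < z) :
    Real.log (∑' n : ℕ, χ n * (n : ℝ) ^ (-z))
      = ∑' p : Nat.Primes, χ p * (p : ℝ) ^ (-z) + eulerRemainder χ z := by
  have hprimes : Summable (fun p : Nat.Primes => χ p * (p : ℝ) ^ (-z)) :=
    (summable_norm_mul_rpow_neg hχ hz).of_norm.subtype _
  rw [eulerRemainder, ((hasSum_log_eulerFactor hχ hχ1 hχmul hz).sub hprimes.hasSum).tsum_eq]
  ring

end EulerProduct

lemma tsum_setOf_eq_one_rpow_neg {χ : ℕ → ℝ} (hχval : ∀ n, χ n = 0 ∨ χ n = 1) (z : ℝ) :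
    ∑' n : {n : ℕ | χ n = 1}, (n : ℝ) ^ (-z) = ∑' n : ℕ, χ n * (n : ℝ) ^ (-z) := by
  rw [tsum_subtype {n : ℕ | χ n = 1} (fun n : ℕ => (n : ℝ) ^ (-z))]
  refine tsum_congr fun n => ?_
  rcases hχval n with h | h <;> simp [h]

lemma tsum_primes_mul_rpow_neg_eq {χ : ℕ → ℝ} {S : Set ℕ} (hS : ∀ p ∈ S, p.Prime)
    (hχS : ∀ p : ℕ, p.Prime → χ p = S.indicator 1 p) (z : ℝ) :
    ∑' p : Nat.Primes, χ p * (p : ℝ) ^ (-z) = ∑' p : S, (p : ℝ) ^ (-z) := by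
  rw [tsum_subtype S (fun n : ℕ => (n : ℝ) ^ (-z))]
  refine (tsum_subtype {p : ℕ | p.Prime} (fun n => χ n * (n : ℝ) ^ (-z))).trans
    (tsum_congr fun n => ?_)
  by_cases hn : n.Prime
  · by_cases hnS : n ∈ S <;> simp [hn, hnS, hχS n hn]
  · rw [Set.indicator_of_notMem fun h => hn (hS n h)]
    simp [hn]

lemma tendsto_log_sub_one_nhdsGT_one : Tendsto (fun z : ℝ => Real.log (z - 1)) (𝓝[>] 1) atBot :=
  Real.tendsto_log_nhdsGT_zero.comp <| tendsto_nhdsWithin_of_tendsto_nhds_of_eventually_within _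
    ((continuous_sub_right 1).tendsto' 1 0 (sub_self 1) |>.mono_left nhdsWithin_le_nhds)
    (eventually_nhdsWithin_of_forall fun _ hz => mem_Ioi.mpr (sub_pos.mpr hz))

lemma tendsto_log_one_div_sub_one_nhdsGT_one :
    Tendsto (fun z : ℝ => Real.log (1 / (z - 1))) (𝓝[>] 1) atTop := by
  refine (tendsto_neg_atBot_atTop.comp tendsto_log_sub_one_nhdsGT_one).congr fun z => ?_
  simp [Real.log_inv]

namespace WeaklyRegular

variable {S : Set ℕ} {a : ℝ}

lemma exists_tendsto_and_eq (h : WeaklyRegular S a) :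
    ∃ G : ℝ → ℝ, ∃ c : ℝ, Tendsto G (𝓝[>] 1) (𝓝 c) ∧
      ∀ z : ℝ, 1 < z → ∑' p : S, (p : ℝ) ^ (-z) = a * Real.log (1 / (z - 1)) + G z := by
  obtain ⟨g, -, hgcont, hg⟩ := h
  refine ⟨fun z => (g z).re, (g 1).re, ?_, fun z hz => ?_⟩
  · have hmap : Tendsto (fun z : ℝ => (z : ℂ)) (𝓝[>] 1) (𝓝[{w : ℂ | 1 ≤ w.re}] 1) :=
      tendsto_nhdsWithin_of_tendsto_nhds_of_eventually_within _
        (Complex.continuous_ofReal.tendsto' 1 1 Complex.ofReal_one |>.mono_left nhdsWithin_le_nhds)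
        (eventually_nhdsWithin_of_forall fun z hz => by simpa using le_of_lt hz)
    exact (Complex.continuous_re.tendsto _).comp ((hgcont 1 (by simp)).tendsto.comp hmap)
  · have hlog : Complex.log (1 / ((z : ℂ) - 1)) = (Real.log (1 / (z - 1)) : ℂ) := by
      rw [Complex.ofReal_log (by have : (1 : ℝ) < z := hz; positivity)]
      push_cast; rfl
    have hsum : ∑' p : S, ((p : ℕ) : ℂ) ^ (-(z : ℂ)) = ((∑' p : S, (p : ℝ) ^ (-z) : ℝ) : ℂ) := by
      rw [Complex.ofReal_tsum]
      exact tsum_congr fun p => by rw [Complex.ofReal_cpow (by positivity)]; push_cast; rfl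
    have hre := congrArg Complex.re (hg z (by simpa using hz))
    rw [hsum, hlog] at hre
    simpa using hre

lemma tendsto_div_log (h : WeaklyRegular S a) :
    Tendsto (fun z : ℝ => (∑' p : S, (p : ℝ) ^ (-z)) / Real.log (1 / (z - 1))) (𝓝[>] 1) (𝓝 a) := by
  obtain ⟨G, c, hG, hPS⟩ := h.exists_tendsto_and_eq
  have hL := tendsto_log_one_div_sub_one_nhdsGT_one
  have hlim : Tendsto (fun z => a + G z * (Real.log (1 / (z - 1)))⁻¹) (𝓝[>] 1) (𝓝 (a + c * 0)) :=
    tendsto_const_nhds.add (hG.mul (tendsto_inv_atTop_zero.comp hL))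
  rw [mul_zero, add_zero] at hlim
  refine hlim.congr' ?_
  filter_upwards [hL.eventually_gt_atTop 0, self_mem_nhdsWithin] with z hz0 hz
  rw [hPS z hz]
  field_simp

end WeaklyRegular

lemma exists_ne_zero_tendsto_iff_eq_one {Φ E : ℝ → ℝ} {a e : ℝ}
    (hΦ : ∀ᶠ z in 𝓝[>] 1, Φ z = Real.exp ((1 - a) * Real.log (z - 1) + E z))
    (hE : Tendsto E (𝓝[>] 1) (𝓝 e)) :
    (∃ δ : ℝ, δ ≠ 0 ∧ Tendsto Φ (𝓝[>] 1) (𝓝 δ)) ↔ a = 1 := by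
  constructor
  · rintro ⟨δ, hδ0, hδ⟩
    have hΦpos : ∀ᶠ z in 𝓝[>] 1, 0 ≤ Φ z := hΦ.mono fun z hz => hz ▸ (Real.exp_pos _).le
    have hδpos : 0 < δ := (ge_of_tendsto hδ hΦpos).lt_of_ne' hδ0
    by_contra ha
    have hlog : Tendsto (fun z => Real.log (z - 1)) (𝓝[>] 1) (𝓝 ((Real.log δ - e) / (1 - a))) := by
      refine (((Real.continuousAt_log hδpos.ne').tendsto.comp hδ).sub hE).div_const _ |>.congr' ?_
      filter_upwards [hΦ] with z hz
      rw [Function.comp_apply, hz, Real.log_exp, add_sub_cancel_right,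
        mul_div_cancel_left₀ _ (sub_ne_zero.mpr (Ne.symm ha))]
    exact not_tendsto_nhds_of_tendsto_atBot tendsto_log_sub_one_nhdsGT_one _ hlog
  · rintro rfl
    refine ⟨Real.exp e, (Real.exp_pos e).ne', ((Real.continuous_exp.tendsto e).comp hE).congr' ?_⟩
    filter_upwards [hΦ] with z hz
    simp [hz]

/-- Let `S` be a weakly regular set of primes, `χ : ℕ → ℝ` a multiplicative
function with values in `{0,1}` characteristic on `S`, and `A = {n | χ n = 1}`. Then `A` has a
nonzero Dedekind-Dirichlet density if and only if `S` has Dirichlet density `1`. -/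
theorem dedekind_density_ne_zero_iff_dirichlet_density_one_of_weaklyRegular
    (S : Set ℕ) (hS : ∀ p ∈ S, Nat.Prime p)
    (a : ℝ) (hreg : WeaklyRegular S a)
    (χ : ℕ → ℝ) (hχ1 : χ 1 = 1)
    (hχmul : ∀ m n : ℕ, Nat.Coprime m n → χ (m * n) = χ m * χ n)
    (hχval : ∀ n : ℕ, χ n = 0 ∨ χ n = 1)
    (hchar : ∀ p : ℕ, Nat.Prime p → (χ p = 1 ↔ p ∈ S)) :
    (∃ δA : ℝ, δA ≠ 0 ∧
      Tendsto (fun z : ℝ => (z - 1) * ∑' n : {n : ℕ | χ n = 1}, ((n : ℕ) : ℝ) ^ (-z))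
        (𝓝[>] 1) (𝓝 δA)) ↔
    Tendsto (fun z : ℝ => (∑' p : S, ((p : ℕ) : ℝ) ^ (-z)) / Real.log (1 / (z - 1)))
      (𝓝[>] 1) (𝓝 1) := by
  have hχ : ∀ n, χ n ∈ Icc (0 : ℝ) 1 := fun n => by rcases hχval n with h | h <;> simp [h]
  have hχS : ∀ p : ℕ, p.Prime → χ p = S.indicator 1 p := fun p hp => by
    by_cases hpS : p ∈ S
    · simp [hpS, (hchar p hp).mpr hpS]
    · simpa [hpS, (hchar p hp).not.mpr hpS] using hχval p
  have hdensity := hreg.tendsto_div_log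
  rw [show _ ↔ a = 1 from ⟨tendsto_nhds_unique hdensity, fun ha => ha ▸ hdensity⟩]
  obtain ⟨G, c, hG, hPS⟩ := hreg.exists_tendsto_and_eq
  have hH := (continuousOn_eulerRemainder hχ hχ1 1 self_mem_Ici).tendsto.mono_left
    (nhdsWithin_mono _ Ioi_subset_Ici_self)
  refine exists_ne_zero_tendsto_iff_eq_one ?_ (hG.add hH)
  filter_upwards [self_mem_nhdsWithin] with z (hz : 1 < z)
  have hF := zero_lt_one.trans_le (one_le_tsum_mul_rpow_neg hχ hχ1 hz)
  rw [tsum_setOf_eq_one_rpow_neg hχval, ← Real.exp_log (mul_pos (sub_pos.mpr hz) hF),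
    Real.log_mul (sub_pos.mpr hz).ne' hF.ne', log_tsum_mul_rpow_neg_eq hχ hχ1 hχmul hz,
    tsum_primes_mul_rpow_neg_eq hS hχS, hPS z hz, one_div, Real.log_inv]
  ring_nf
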